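/- For any additive subsemigroup Δ ⊂ ℤⁿ and any r ≥ 1, the subspace I^{(r)}_Δ = ⊕_{a₁,...,a_r ∈ Δ} C_{a₁+...+a_r} is an ideal of the algebra C_Δ = ⊕_{a∈Δ} C_a with respect to both the cup product and the Gerstenhaber bracket. -/

import Mathlib

open Finset

namespace Gerst

/-- A `p`-cochain of the algebra `A`: a map `A^p → A`. -/
abbrev Cochain (A : Type*) (p : ℕ) := (Fin p → A) → A

variable {A : Type*} [CommRing A]

/-- The cup product of cochains. -/
def cup {p q : ℕ} (φ : Cochain A p) (ψ : Cochain A q) : Cochain A (p + q) :=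
  fun u => φ (fun i => u (Fin.castAdd q i)) * ψ (fun i => u (Fin.natAdd p i))

/-- Insert the value of `ψ` at position `k` among the arguments of a `p`-cochain. -/
def insertArg {p q : ℕ} (ψ : Cochain A q) (k : Fin p) (u : Fin (p + q - 1) → A) :
    Fin p → A :=
  fun i =>
    if _h : i.val < k.val then u ⟨i.val, by have := i.isLt; have := k.isLt; omega⟩
    else if _h2 : i.val = k.val then
      ψ (fun j => u ⟨k.val + j.val, by have := j.isLt; have := k.isLt; omega⟩)
    else u ⟨i.val + q - 1, by have := i.isLt; have := k.isLt; omega⟩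

/-- `(-1)^m` for an integer exponent `m`. -/
def sgn (m : ℤ) : ℤ := ((-1 : ℤˣ) ^ m : ℤˣ)

/-- The Gerstenhaber circle (composition) product. -/
def circ {p q : ℕ} (φ : Cochain A p) (ψ : Cochain A q) : Cochain A (p + q - 1) :=
  fun u => ∑ k : Fin p, sgn ((k.val : ℤ) * ((q : ℤ) - 1)) • φ (insertArg ψ k u)

/-- The Gerstenhaber bracket. -/
def bracket {p q : ℕ} (φ : Cochain A p) (ψ : Cochain A q) : Cochain A (p + q - 1) :=
  fun u => circ φ ψ u -
    sgn (((p : ℤ) - 1) * ((q : ℤ) - 1)) •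
      circ ψ φ (fun i => u (Fin.cast (by omega) i))

/-- The multiplication of `A` as a 2-cochain. -/
def mulC : Cochain A 2 := fun u => u 0 * u 1

/-- The Hochschild coboundary operator. -/
def hdelta {p : ℕ} (φ : Cochain A p) : Cochain A (p + 1) :=
  fun u => u 0 * φ (fun i => u i.succ)
    + ∑ k : Fin p, ((-1 : ℤ) ^ (k.val + 1)) •
        φ (fun i =>
          if i.val < k.val then u ⟨i.val, by have := i.isLt; omega⟩
          else if i.val = k.val then
            u ⟨k.val, by have := k.isLt; omega⟩ * u ⟨k.val + 1, by have := k.isLt; omega⟩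
          else u ⟨i.val + 1, by have := i.isLt; omega⟩)
    + ((-1 : ℤ) ^ (p + 1)) • (φ (fun i => u i.castSucc) * u (Fin.last p))

/-- The iterated partial derivative `∂^a` on `ℝ[x₁,…,xₙ]`. -/
noncomputable def Dpow {n : ℕ} (a : Fin n → ℕ) :
    Module.End ℝ (MvPolynomial (Fin n) ℝ) :=
  ((List.finRange n).map
    (fun i => ((MvPolynomial.pderiv i).toLinearMap) ^ (a i))).prod

/-- The elementary cochain `x^{a₀} ∂^{a₁} ⊗ ⋯ ⊗ ∂^{a_p}`. -/
noncomputable def elem {n p : ℕ} (a₀ : Fin n → ℕ) (as : Fin p → Fin n → ℕ) :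
    Cochain (MvPolynomial (Fin n) ℝ) p :=
  fun u => MvPolynomial.monomial (Finsupp.equivFunOnFinite.symm a₀) (1 : ℝ) *
    ∏ s : Fin p, Dpow (as s) (u s)

/-- The weight `a₀ - ∑ₛ aₛ ∈ ℤⁿ` of an elementary cochain. -/
def wt {n p : ℕ} (a₀ : Fin n → ℕ) (as : Fin p → Fin n → ℕ) : Fin n → ℤ :=
  fun i => (a₀ i : ℤ) - ∑ s : Fin p, (as s i : ℤ)

/-- The total degree `a₀ + ∑ₛ aₛ` of an elementary cochain. -/
def swt {n p : ℕ} (a₀ : Fin n → ℕ) (as : Fin p → Fin n → ℕ) : Fin n → ℤ :=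
  fun i => (a₀ i : ℤ) + ∑ s : Fin p, (as s i : ℤ)

/-- The weight space `C_a`. -/
noncomputable def WS (n p : ℕ) (a : Fin n → ℤ) :
    Submodule ℝ (Cochain (MvPolynomial (Fin n) ℝ) p) :=
  Submodule.span ℝ {φ | ∃ a₀ as, wt a₀ as = a ∧ φ = elem a₀ as}

/-- `C_Δ = ⊕_{a ∈ Δ} C_a`. -/
noncomputable def CD (n p : ℕ) (Δ : Set (Fin n → ℤ)) :
    Submodule ℝ (Cochain (MvPolynomial (Fin n) ℝ) p) :=
  Submodule.span ℝ {φ | ∃ a₀ as, wt a₀ as ∈ Δ ∧ φ = elem a₀ as}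

/-- The Euler vector field `hⁱ = xᵢ ∂ᵢ` as a 1-cochain. -/
noncomputable def hV {n : ℕ} (i : Fin n) : Cochain (MvPolynomial (Fin n) ℝ) 1 :=
  fun u => MvPolynomial.X i * MvPolynomial.pderiv i (u 0)


/-- The `r`-fold iterated sumset of a set `Δ`. -/
def iterSum {n : ℕ} (Δ : Set (Fin n → ℤ)) (r : ℕ) : Set (Fin n → ℤ) :=
  {x | ∃ f : Fin r → (Fin n → ℤ), (∀ i, f i ∈ Δ) ∧ x = ∑ i, f i}

end Gerst

/-!
Every elementary cochain has a weight, and weights add: for the cup product this is immediate,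
and for the insertion `φ ∘ₖ ψ` of `ψ` into the `k`-th slot of an elementary `φ` one moves the
derivative `∂^{a_k}` that `φ` applies in that slot onto `ψ`. By the Leibniz rule this lowers the
weight of `ψ` by exactly `a_k`, which the slot no longer contributes to the weight of `φ`; and
inserting an elementary cochain into a slot without derivatives just splices the multi-indices.
Hence `C_S ⌣ C_T` and `[C_S, C_T]` lie in
`C_{S+T}`, and `Δ + I^{(r)}_Δ ⊆ I^{(r)}_Δ` once `r ≥ 1`.
-/

open MvPolynomial
open scoped Pointwise

theorem MvPolynomial.pderiv_pderiv_comm {σ K : Type*} [CommRing K] (i j : σ)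
    (f : MvPolynomial σ K) : pderiv i (pderiv j f) = pderiv j (pderiv i f) := by
  have h : ⁅pderiv i, pderiv j⁆ = (0 : Derivation K (MvPolynomial σ K) (MvPolynomial σ K)) :=
    derivation_ext fun k => by
      rw [Derivation.commutator_apply]
      classical simp [pderiv_X, Pi.single_apply, apply_ite]
  have := DFunLike.congr_fun h f
  rwa [Derivation.commutator_apply, Derivation.zero_apply, sub_eq_zero] at this

theorem Derivation.map_prod_eq_sum_update {K B ι : Type*} [CommSemiring K] [CommSemiring B]
    [Algebra K B] [DecidableEq ι] (D : Derivation K B B) (s : Finset ι) (h : ι → B) :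
    D (∏ t ∈ s, h t) = ∑ t ∈ s, ∏ x ∈ s, Function.update h t (D (h t)) x := by
  induction s using Finset.induction_on with
  | empty => simp
  | insert a s ha ih =>
    have hne : ∀ t ∈ s, t ≠ a := fun t ht hta => ha (hta ▸ ht)
    rw [prod_insert ha, Derivation.leibniz, ih, sum_insert ha, prod_insert ha,
      Function.update_self, prod_congr rfl fun x hx => Function.update_of_ne (hne x hx) _ _,
      smul_eq_mul, smul_eq_mul, mul_sum, add_comm, mul_comm]
    congr 1
    exact sum_congr rfl fun t ht => by
      rw [prod_insert ha, Function.update_of_ne (hne t ht).symm]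

theorem List.mul_prod_map_eq_prod_map_update {M ι : Type*} [Monoid M] [DecidableEq ι]
    {f : ι → M} {x : M} (hx : ∀ j, Commute x (f j)) {i : ι} :
    ∀ {L : List ι}, i ∈ L → L.Nodup →
      x * (L.map f).prod = (L.map (Function.update f i (x * f i))).prod
  | a :: L, hi, hL => by
    rw [List.nodup_cons] at hL
    rcases List.mem_cons.mp hi with rfl | hi
    · rw [List.map_cons, List.map_cons, List.prod_cons, List.prod_cons, ← mul_assoc,
        Function.update_self]
      congr 2
      exact (List.map_congr_left fun j hj =>
        Function.update_of_ne (ne_of_mem_of_not_mem hj hL.1) _ _).symm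
    · rw [List.map_cons, List.map_cons, List.prod_cons, List.prod_cons, ← mul_assoc,
        (hx a).eq, mul_assoc, mul_prod_map_eq_prod_map_update hx hi hL.2,
        Function.update_of_ne (by rintro rfl; exact hL.1 hi)]

namespace Gerst

variable {n : ℕ}

local notation "R" => MvPolynomial (Fin n) ℝ

theorem Dpow_zero : Dpow (0 : Fin n → ℕ) = 1 :=
  List.prod_eq_one fun _ h => by
    obtain ⟨i, -, rfl⟩ := List.mem_map.mp h
    exact pow_zero _

theorem Dpow_add_single (c : Fin n → ℕ) (i : Fin n) :
    Dpow (c + Pi.single i 1) = (pderiv i).toLinearMap * Dpow c := by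
  classical
  have hcomm : ∀ j, Commute ((pderiv i).toLinearMap : Module.End ℝ R)
      ((pderiv j).toLinearMap ^ c j) := fun j =>
    (show Commute _ _ from LinearMap.ext fun f => pderiv_pderiv_comm i j f).pow_right _
  rw [Dpow, Dpow, List.mul_prod_map_eq_prod_map_update hcomm (List.mem_finRange i)
    (List.nodup_finRange n)]
  congr 2
  funext j
  rcases eq_or_ne j i with rfl | hj
  · simp [pow_succ']
  · simp [hj]

noncomputable def xpow (a : Fin n → ℕ) : R :=
  monomial (Finsupp.equivFunOnFinite.symm a) 1

theorem xpow_add (a b : Fin n → ℕ) : xpow (a + b) = xpow a * xpow b := by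
  rw [xpow, xpow, xpow, monomial_mul, one_mul]
  congr 2
  ext; rfl

theorem pderiv_xpow (i : Fin n) (a : Fin n → ℕ) :
    pderiv i (xpow a) = (a i : ℝ) • xpow (a - Pi.single i 1) := by
  classical
  rw [xpow, xpow, pderiv_monomial, smul_monomial, smul_eq_mul, mul_one, one_mul]
  congr 2
  ext j
  simp [Pi.single_apply, Finsupp.single_apply, eq_comm]

theorem elem_apply {p : ℕ} (a₀ : Fin n → ℕ) (as : Fin p → Fin n → ℕ) (u : Fin p → R) :
    elem a₀ as u = xpow a₀ * ∏ s, Dpow (as s) (u s) := rfl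

abbrev castZ : (Fin n → ℕ) →+ (Fin n → ℤ) := (Nat.castAddMonoidHom ℤ).compLeft (Fin n)

theorem wt_eq {p : ℕ} (a₀ : Fin n → ℕ) (as : Fin p → Fin n → ℕ) :
    wt a₀ as = castZ a₀ - ∑ s, castZ (as s) := by
  funext i
  simp [wt, Finset.sum_apply]

theorem wt_append {p q : ℕ} (a₀ b₀ : Fin n → ℕ) (as : Fin p → Fin n → ℕ)
    (bs : Fin q → Fin n → ℕ) :
    wt (a₀ + b₀) (Fin.append as bs) = wt a₀ as + wt b₀ bs := by
  simp only [wt_eq, map_add, Fin.sum_univ_add, Fin.append_left, Fin.append_right]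
  abel

theorem wt_update_add {q : ℕ} (b₀ : Fin n → ℕ) (bs : Fin q → Fin n → ℕ) (t : Fin q)
    (d : Fin n → ℕ) :
    wt b₀ (Function.update bs t (bs t + d)) = wt b₀ bs - castZ d := by
  have : Function.update bs t (bs t + d) = bs + Pi.single t d := by
    funext s
    rcases eq_or_ne s t with rfl | hs
    · simp
    · simp [hs]
  simp only [this, wt_eq, Pi.add_apply, map_add, sum_add_distrib, ← map_sum, sum_pi_single',
    mem_univ, if_true]
  abel

theorem wt_sub_single {q : ℕ} (b₀ : Fin n → ℕ) (bs : Fin q → Fin n → ℕ) {i : Fin n}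
    (hi : b₀ i ≠ 0) :
    wt (b₀ - Pi.single i 1) bs = wt b₀ bs - castZ (Pi.single i 1) := by
  funext j
  rcases eq_or_ne j i with rfl | hj
  · simp only [wt, Pi.sub_apply, Pi.single_eq_same, AddMonoidHom.compLeft_apply,
      Nat.coe_castAddMonoidHom, Function.comp_apply, Nat.cast_one]
    omega
  · simp [wt, hj]

theorem elem_mem_CD {p : ℕ} {S : Set (Fin n → ℤ)} {a₀ : Fin n → ℕ} {as : Fin p → Fin n → ℕ}
    (h : wt a₀ as ∈ S) : elem a₀ as ∈ CD n p S :=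
  Submodule.subset_span ⟨a₀, as, h, rfl⟩

theorem CD_mono {p : ℕ} {S T : Set (Fin n → ℤ)} (h : S ⊆ T) : CD n p S ≤ CD n p T :=
  Submodule.span_mono fun _ ⟨a₀, as, ha, hφ⟩ => ⟨a₀, as, h ha, hφ⟩

theorem map_mem_of_mem_CD {p : ℕ} {S : Set (Fin n → ℤ)} {M : Type*} [AddCommMonoid M]
    [Module ℝ M] (f : Cochain R p →ₗ[ℝ] M) {N : Submodule ℝ M}
    (hf : ∀ a₀ as, wt a₀ as ∈ S → f (elem a₀ as) ∈ N) {φ : Cochain R p}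
    (hφ : φ ∈ CD n p S) : f φ ∈ N :=
  (Submodule.span_le (p := N.comap f)).mpr (by rintro _ ⟨a₀, as, ha, rfl⟩; exact hf a₀ as ha) hφ

def LowersWeight (T : Module.End ℝ R) (d : Fin n → ℕ) : Prop :=
  ∀ ⦃q : ℕ⦄ ⦃w : Fin n → ℤ⦄ ⦃G : Cochain R q⦄, G ∈ CD n q {w} →
    (fun v => T (G v)) ∈ CD n q {w - castZ d}

theorem LowersWeight.one : LowersWeight (1 : Module.End ℝ R) 0 := by
  intro q w G hG
  simpa using hG

theorem LowersWeight.mul {S T : Module.End ℝ R} {d e : Fin n → ℕ} (hS : LowersWeight S e)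
    (hT : LowersWeight T d) : LowersWeight (S * T) (d + e) := by
  intro q w G hG
  have := hS (hT hG)
  rwa [sub_sub, ← map_add] at this

theorem LowersWeight.pow {T : Module.End ℝ R} {d : Fin n → ℕ} (hT : LowersWeight T d) :
    ∀ m : ℕ, LowersWeight (T ^ m) (m • d)
  | 0 => by simpa using LowersWeight.one
  | m + 1 => by
    rw [pow_succ, succ_nsmul']
    exact (hT.pow m).mul hT

theorem LowersWeight.list_prod {ι : Type*} {T : ι → Module.End ℝ R} {d : ι → Fin n → ℕ}
    (h : ∀ i, LowersWeight (T i) (d i)) :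
    ∀ L : List ι, LowersWeight (L.map T).prod (L.map d).sum
  | [] => LowersWeight.one
  | a :: L => by simpa [add_comm] using (h a).mul (LowersWeight.list_prod h L)

theorem pderiv_comp_elem (i : Fin n) {q : ℕ} (b₀ : Fin n → ℕ) (bs : Fin q → Fin n → ℕ) :
    (fun v => pderiv i (elem b₀ bs v)) = (b₀ i : ℝ) • elem (b₀ - Pi.single i 1) bs +
      ∑ t, elem b₀ (Function.update bs t (bs t + Pi.single i 1)) := by
  classical
  funext v
  simp only [elem_apply, Pi.add_apply, Pi.smul_apply, Finset.sum_apply]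
  rw [pderiv_mul, pderiv_xpow, Derivation.map_prod_eq_sum_update, mul_sum, smul_mul_assoc]
  congr 1
  refine sum_congr rfl fun t _ => congrArg _ (prod_congr rfl fun s _ => ?_)
  rcases eq_or_ne s t with rfl | hs
  · simp [Dpow_add_single]
  · simp [hs]

theorem lowersWeight_pderiv (i : Fin n) :
    LowersWeight (pderiv i).toLinearMap (Pi.single i 1) := by
  intro q w G hG
  refine map_mem_of_mem_CD (LinearMap.compLeft (pderiv i).toLinearMap (Fin q → R)) ?_ hG
  rintro b₀ bs rfl
  change (fun v => pderiv i (elem b₀ bs v)) ∈ _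
  rw [pderiv_comp_elem]
  refine add_mem ?_ (sum_mem fun t _ => elem_mem_CD (wt_update_add b₀ bs t _))
  by_cases hi : b₀ i = 0
  · simp [hi]
  · exact Submodule.smul_mem _ _ (elem_mem_CD (wt_sub_single b₀ bs hi))

theorem lowersWeight_Dpow (c : Fin n → ℕ) : LowersWeight (Dpow c) c := by
  have h := LowersWeight.list_prod (fun i => (lowersWeight_pderiv i).pow (c i)) (List.finRange n)
  have hc : ((List.finRange n).map fun i => c i • Pi.single i 1).sum = c := by
    rw [← Fin.sum_univ_def]
    simpa [← Pi.single_smul'] using univ_sum_single c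
  rwa [hc] at h

/-- The arguments of `φ ∘ₖ ψ`: those of `φ` other than the `k`-th keep their order, and those
of `ψ` fill the block `k, …, k + q - 1`. -/
def blockEquiv {p q : ℕ} (k : Fin p) : {s : Fin p // s ≠ k} ⊕ Fin q ≃ Fin (p + q - 1) where
  toFun
    | .inl s =>
      if h : s.1 < k then ⟨s.1, by omega⟩
      else ⟨s.1 + q - 1, by have := s.1.isLt; have := Fin.val_ne_of_ne s.2; omega⟩
    | .inr t => ⟨k + t, by omega⟩
  invFun j :=
    if h : j.val < k.val then .inl ⟨⟨j, by omega⟩, fun h' => by simp [Fin.ext_iff] at h'; omega⟩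
    else if h' : j.val < k.val + q then .inr ⟨j - k, by omega⟩
    else .inl ⟨⟨j + 1 - q, by omega⟩, fun h' => by simp [Fin.ext_iff] at h'; omega⟩
  left_inv := by
    rintro (⟨s, hs⟩ | t)
    · have := Fin.val_ne_of_ne hs
      by_cases h : s < k
      · simp [h]
      · have h' : k.val < s.val := by rw [Fin.lt_def] at h; omega
        simp only [h, dite_false]
        rw [dif_neg (by omega), dif_neg (by omega)]
        simp only [Sum.inl.injEq, Subtype.mk.injEq, Fin.ext_iff]
        omega
    · simp
  right_inv j := by
    by_cases h : j.val < k.val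
    · simp only [h, dite_true]
      exact dif_pos h
    · by_cases h' : j.val < k.val + q
      · simp only [h, h', dite_true, dite_false, Fin.ext_iff]
        omega
      · simp only [h, h', dite_false]
        rw [dif_neg (fun h'' => by simp only [Fin.lt_def] at h''; omega)]
        simp only [Fin.ext_iff]
        omega

def splice {α : Type*} {p q : ℕ} (k : Fin p) (f : Fin p → α) (g : Fin q → α) :
    Fin (p + q - 1) → α :=
  fun j => Sum.elim (fun s => f s.1) g ((blockEquiv k).symm j)

section Insert

variable {A : Type*} {p q : ℕ} (ψ : Cochain A q) (k : Fin p) (u : Fin (p + q - 1) → A)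

theorem insertArg_self : insertArg ψ k u k = ψ fun t => u (blockEquiv k (.inr t)) := by
  simp [insertArg, blockEquiv]

theorem insertArg_of_ne (s : {s : Fin p // s ≠ k}) :
    insertArg ψ k u s = u (blockEquiv k (.inl s)) := by
  have := Fin.val_ne_of_ne s.2
  by_cases h : s.1 < k
  · simp [insertArg, blockEquiv, h]
  · simp [insertArg, blockEquiv, h, this]

end Insert

theorem elem_insertArg {p q : ℕ} (a₀ : Fin n → ℕ) (as : Fin p → Fin n → ℕ) (ψ : Cochain R q)
    (k : Fin p) (u : Fin (p + q - 1) → R) :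
    elem a₀ as (insertArg ψ k u) = xpow a₀ * Dpow (as k) (ψ fun t => u (blockEquiv k (.inr t))) *
      ∏ s : {s // s ≠ k}, Dpow (as s) (u (blockEquiv k (.inl s))) := by
  rw [elem_apply, Fintype.prod_eq_mul_prod_subtype_ne _ k, insertArg_self, mul_assoc]
  simp only [insertArg_of_ne]

noncomputable def insertElem {p : ℕ} (a₀ : Fin n → ℕ) (as : Fin p → Fin n → ℕ) (k : Fin p)
    (q : ℕ) : Cochain R q →ₗ[ℝ] Cochain R (p + q - 1) where
  toFun ψ u := elem a₀ as (insertArg ψ k u)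
  map_add' ψ χ := by
    funext u
    simp only [elem_insertArg, Pi.add_apply, map_add]
    ring
  map_smul' c ψ := by
    funext u
    simp only [elem_insertArg, Pi.smul_apply, map_smul, RingHom.id_apply, mul_smul_comm,
      smul_mul_assoc]

theorem insertElem_apply {p q : ℕ} (a₀ : Fin n → ℕ) (as : Fin p → Fin n → ℕ) (k : Fin p)
    (ψ : Cochain R q) (u : Fin (p + q - 1) → R) :
    insertElem a₀ as k q ψ u = elem a₀ as (insertArg ψ k u) := rfl

theorem insertElem_eq_update {p q : ℕ} (a₀ : Fin n → ℕ) (as : Fin p → Fin n → ℕ) (k : Fin p)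
    (ψ : Cochain R q) :
    insertElem a₀ as k q ψ =
      insertElem a₀ (Function.update as k 0) k q (fun v => Dpow (as k) (ψ v)) := by
  have hupd (s : {s // s ≠ k}) : Function.update as k 0 s = as s := Function.update_of_ne s.2 _ _
  funext u
  simp [insertElem_apply, elem_insertArg, Dpow_zero, hupd]

theorem insertElem_update_elem {p q : ℕ} (a₀ b₀ : Fin n → ℕ) (as : Fin p → Fin n → ℕ)
    (bs : Fin q → Fin n → ℕ) (k : Fin p) :
    insertElem a₀ (Function.update as k 0) k q (elem b₀ bs) = elem (a₀ + b₀) (splice k as bs) := by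
  have hupd (s : {s // s ≠ k}) : Function.update as k 0 s = as s := Function.update_of_ne s.2 _ _
  funext u
  rw [insertElem_apply, elem_insertArg, elem_apply, elem_apply, xpow_add,
    ← (blockEquiv k).prod_comp, Fintype.prod_sum_type]
  simp only [Function.update_self, Dpow_zero, Module.End.one_apply, hupd, splice,
    Equiv.symm_apply_apply, Sum.elim_inl, Sum.elim_inr]
  ring

theorem wt_splice {p q : ℕ} (a₀ b₀ : Fin n → ℕ) (as : Fin p → Fin n → ℕ)
    (bs : Fin q → Fin n → ℕ) (k : Fin p) :
    wt (a₀ + b₀) (splice k as bs) = wt a₀ as + castZ (as k) + wt b₀ bs := by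
  simp only [wt_eq, map_add, ← (blockEquiv k).sum_comp, Fintype.sum_sum_type, splice,
    Equiv.symm_apply_apply, Sum.elim_inl, Sum.elim_inr, Fintype.sum_eq_add_sum_subtype_ne _ k]
  abel

theorem insertElem_mem_CD {p q : ℕ} (a₀ : Fin n → ℕ) (as : Fin p → Fin n → ℕ) (k : Fin p)
    {w : Fin n → ℤ} {ψ : Cochain R q} (hψ : ψ ∈ CD n q {w}) :
    insertElem a₀ as k q ψ ∈ CD n (p + q - 1) {wt a₀ as + w} := by
  rw [insertElem_eq_update]
  refine map_mem_of_mem_CD _ ?_ (lowersWeight_Dpow (as k) hψ)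
  rintro b₀ bs hb
  rw [insertElem_update_elem]
  refine elem_mem_CD (Set.mem_singleton_iff.mpr ?_)
  rw [wt_splice, Set.mem_singleton_iff.mp hb]
  abel

section Products

variable {A K : Type*} [CommRing A] [CommSemiring K]

def cupBilin [Algebra K A] (p q : ℕ) :
    Cochain A p →ₗ[K] Cochain A q →ₗ[K] Cochain A (p + q) :=
  LinearMap.mk₂ K cup
    (fun _ _ _ => funext fun _ => add_mul _ _ _) (fun _ _ _ => funext fun _ => smul_mul_assoc _ _ _)
    (fun _ _ _ => funext fun _ => mul_add _ _ _) (fun _ _ _ => funext fun _ => mul_smul_comm _ _ _)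

def circLeft [Module K A] (p : ℕ) {q : ℕ} (ψ : Cochain A q) :
    Cochain A p →ₗ[K] Cochain A (p + q - 1) where
  toFun φ := circ φ ψ
  map_add' φ χ := funext fun u => by simp [circ, smul_add, sum_add_distrib]
  map_smul' c φ := funext fun u => by
    simp only [circ, Pi.smul_apply, RingHom.id_apply, smul_sum]
    exact sum_congr rfl fun k _ => smul_comm _ _ _

end Products

theorem cup_elem {p q : ℕ} (a₀ b₀ : Fin n → ℕ) (as : Fin p → Fin n → ℕ)
    (bs : Fin q → Fin n → ℕ) :
    cup (elem a₀ as) (elem b₀ bs) = elem (a₀ + b₀) (Fin.append as bs) := by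
  funext u
  simp only [cup, elem_apply, Fin.prod_univ_add, Fin.append_left, Fin.append_right, xpow_add]
  ring

theorem circ_elem {p q : ℕ} (a₀ : Fin n → ℕ) (as : Fin p → Fin n → ℕ) (ψ : Cochain R q) :
    circ (elem a₀ as) ψ = ∑ k : Fin p, sgn (k * ((q : ℤ) - 1)) • insertElem a₀ as k q ψ := by
  funext u
  simp [circ, insertElem_apply]

section Closure

variable {p q : ℕ} {S T : Set (Fin n → ℤ)} {φ : Cochain (MvPolynomial (Fin n) ℝ) p}
  {ψ : Cochain (MvPolynomial (Fin n) ℝ) q}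

theorem cup_mem_CD (hφ : φ ∈ CD n p S) (hψ : ψ ∈ CD n q T) : cup φ ψ ∈ CD n (p + q) (S + T) := by
  refine map_mem_of_mem_CD ((cupBilin (K := ℝ) p q).flip ψ) (fun a₀ as ha => ?_) hφ
  refine map_mem_of_mem_CD (cupBilin (K := ℝ) p q (elem a₀ as)) (fun b₀ bs hb => ?_) hψ
  change cup _ _ ∈ _
  rw [cup_elem]
  exact elem_mem_CD (wt_append a₀ b₀ as bs ▸ Set.add_mem_add ha hb)

theorem circ_mem_CD (hφ : φ ∈ CD n p S) (hψ : ψ ∈ CD n q T) :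
    circ φ ψ ∈ CD n (p + q - 1) (S + T) := by
  refine map_mem_of_mem_CD (circLeft (K := ℝ) p ψ) (fun a₀ as ha => ?_) hφ
  change circ (elem a₀ as) ψ ∈ _
  rw [circ_elem]
  refine sum_mem fun k _ => zsmul_mem (map_mem_of_mem_CD _ (fun b₀ bs hb => ?_) hψ) _
  exact CD_mono (Set.singleton_subset_iff.mpr (Set.add_mem_add ha hb))
    (insertElem_mem_CD a₀ as k (elem_mem_CD rfl))

theorem cast_mem_CD {m m' : ℕ} (h : m = m') {χ : Cochain R m} (hχ : χ ∈ CD n m S) :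
    (fun u : Fin m' → R => χ fun i => u (Fin.cast h i)) ∈ CD n m' S := by
  subst h
  exact hχ

theorem bracket_mem_CD (hφ : φ ∈ CD n p S) (hψ : ψ ∈ CD n q T) :
    bracket φ ψ ∈ CD n (p + q - 1) (S + T) := by
  have h := cast_mem_CD (by omega : q + p - 1 = p + q - 1) (circ_mem_CD hψ hφ)
  rw [add_comm T S] at h
  exact sub_mem (circ_mem_CD hφ hψ) (zsmul_mem h _)

theorem add_iterSum_subset {Δ : Set (Fin n → ℤ)} (hΔ : ∀ a ∈ Δ, ∀ b ∈ Δ, a + b ∈ Δ) {r : ℕ}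
    (hr : 1 ≤ r) : Δ + iterSum Δ r ⊆ iterSum Δ r := by
  obtain ⟨r, rfl⟩ := Nat.exists_eq_add_of_le' hr
  rintro _ ⟨a, ha, _, ⟨f, hf, rfl⟩, rfl⟩
  refine ⟨Fin.cons (a + f 0) (Fin.tail f), Fin.cases (hΔ a ha _ (hf 0)) (fun i => hf i.succ), ?_⟩
  simp [Fin.sum_univ_succ, add_assoc, Fin.tail]

end Closure

/-- Proposition 1(i): `I^{(r)}_Δ = ⊕_{a₁,…,a_r∈Δ} C_{a₁+⋯+a_r}`
is an ideal of `C_Δ` for the cup product and the Gerstenhaber bracket. -/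
theorem Ir_ideal {n : ℕ} (Δ : Set (Fin n → ℤ))
    (hΔ : ∀ a ∈ Δ, ∀ b ∈ Δ, a + b ∈ Δ) (r : ℕ) (hr : 1 ≤ r) :
    ∀ (p q : ℕ) (φ : Cochain (MvPolynomial (Fin n) ℝ) p)
      (ψ : Cochain (MvPolynomial (Fin n) ℝ) q),
      φ ∈ CD n p Δ → ψ ∈ CD n q (iterSum Δ r) →
        cup φ ψ ∈ CD n (p + q) (iterSum Δ r) ∧
        cup ψ φ ∈ CD n (q + p) (iterSum Δ r) ∧
        bracket φ ψ ∈ CD n (p + q - 1) (iterSum Δ r) ∧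
        bracket ψ φ ∈ CD n (q + p - 1) (iterSum Δ r) := by
  intro p q φ ψ hφ hψ
  have hleft : Δ + iterSum Δ r ⊆ iterSum Δ r := add_iterSum_subset hΔ hr
  have hright : iterSum Δ r + Δ ⊆ iterSum Δ r := add_comm Δ (iterSum Δ r) ▸ hleft
  exact ⟨CD_mono hleft (cup_mem_CD hφ hψ), CD_mono hright (cup_mem_CD hψ hφ),
    CD_mono hleft (bracket_mem_CD hφ hψ), CD_mono hright (bracket_mem_CD hψ hφ)⟩

end Gerst
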